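/- (Average gradient-norm bound.) Under the hypotheses of the CRAFT convergence theorem—f_1, …, f_N : ℝ^d → ℝ L-smooth with ‖∇f_i‖ ≤ G_f, weights ρ_i > 0 summing to 1 with ρ_min = min_i ρ_i, F = Σ ρ_i f_i bounded below by F⋆, server trajectory θ_{t+1} = θ_t − η_g g_t where at each round the nonzero accumulated client updates g_i^t (from K_i local gradient-descent steps of rate η_l starting at θ_t, K_max = max_i K_i) satisfy ⟨g_i^t/‖g_i^t‖, g_t⟩ = ρ_i for all i and ‖g_t‖ ≤ G—one has, for any T ≥ 1: (1/T) Σ_{t=0}^{T−1} ‖∇F(θ_t)‖ ≤ (F(θ_0) − F⋆)/(ρ_min η_g T) + L η_g G²/(2 ρ_min) + (B_drift/ρ_min) η_l (K_max − 1), where B_drift = (L G_f/2)(G + Σ_{i=1}^N ρ_i²). -/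

import Mathlib

/-!
The accumulated update of client `i` is `η_l K_i` times the average of the gradients of `f_i`
along its local trajectory, and after `k` local steps that trajectory is within `k η_l G_f` of
`θ`; so `g_i / (η_l K_i)` is within `L η_l G_f (K_i - 1) / 2` of `∇f_i(θ)`. Since each `g_i`
makes the inner product `ρ_i ‖g_i‖` with `g`, the triangle inequality and `ρ_min ≤ ρ_i` turn
`ρ_min ‖∇F(θ_t)‖` into `⟪∇F(θ_t), g_t⟫` up to the drift error `B_drift η_l (K_max - 1)`. The
descent lemma for the `L`-smooth `F` bounds `η_g ⟪∇F(θ_t), g_t⟫` by the decrease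
`F(θ_t) - F(θ_{t+1})` plus `L η_g² G² / 2`, and summing over the rounds telescopes.
-/

open scoped InnerProductSpace BigOperators

/-- Local gradient-descent trajectory. -/
noncomputable def traj {E : Type*} [NormedAddCommGroup E] [InnerProductSpace ℝ E]
    [CompleteSpace E] (f : E → ℝ) (ηl : ℝ) (θ : E) : ℕ → E
  | 0 => θ
  | k + 1 => traj f ηl θ k - ηl • gradient f (traj f ηl θ k)

open Finset

theorem nonneg_of_forall_norm_sub_le_mul_norm_sub {E F : Type*} [NormedAddCommGroup E]
    [Nontrivial E] [SeminormedAddCommGroup F] {φ : E → F} {L : ℝ}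
    (h : ∀ x y, ‖φ x - φ y‖ ≤ L * ‖x - y‖) : 0 ≤ L := by
  obtain ⟨x, hx⟩ := exists_ne (0 : E)
  have := (norm_nonneg _).trans (h x 0)
  rw [sub_zero] at this
  exact nonneg_of_mul_nonneg_left this (norm_pos_iff.mpr hx)

theorem sum_range_natCast (n : ℕ) : ∑ k ∈ range n, (k : ℝ) = n * (n - 1) / 2 := by
  induction n with
  | zero => simp
  | succ n ih => rw [sum_range_succ, ih]; push_cast; ring

theorem sum_range_le_sub_add_mul {x Φ : ℕ → ℝ} {C m : ℝ} (h : ∀ t, x t ≤ Φ t - Φ (t + 1) + C)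
    (hm : ∀ t, m ≤ Φ t) (T : ℕ) : ∑ t ∈ range T, x t ≤ Φ 0 - m + T * C := by
  calc ∑ t ∈ range T, x t ≤ ∑ t ∈ range T, (Φ t - Φ (t + 1) + C) := sum_le_sum fun t _ => h t
    _ = Φ 0 - Φ T + T * C := by
      rw [sum_add_distrib, sum_range_sub' Φ, sum_const, card_range, nsmul_eq_mul]
    _ ≤ Φ 0 - m + T * C := by linarith [hm T]

section Convex

variable {ι F : Type*} [SeminormedAddCommGroup F] [NormedSpace ℝ F] (s : Finset ι)
  {ρ : ι → ℝ}

theorem norm_sum_smul_sub_sum_smul_le (hρ : ∀ i ∈ s, 0 ≤ ρ i) (hρs : ∑ i ∈ s, ρ i = 1)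
    {a b : ι → F} {c : ℝ} (h : ∀ i ∈ s, ‖a i - b i‖ ≤ c) :
    ‖∑ i ∈ s, ρ i • a i - ∑ i ∈ s, ρ i • b i‖ ≤ c := by
  rw [← sum_sub_distrib]
  calc ‖∑ i ∈ s, (ρ i • a i - ρ i • b i)‖ ≤ ∑ i ∈ s, ‖ρ i • (a i - b i)‖ := by
        simpa only [smul_sub] using norm_sum_le s _
    _ ≤ ∑ i ∈ s, ρ i * c := by
        refine sum_le_sum fun i hi => ?_
        rw [norm_smul, Real.norm_of_nonneg (hρ i hi)]
        exact mul_le_mul_of_nonneg_left (h i hi) (hρ i hi)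
    _ = c := by rw [← sum_mul, hρs, one_mul]

end Convex

section Alignment

variable {E : Type*} [NormedAddCommGroup E] [InnerProductSpace ℝ E]

theorem real_inner_smul_eq_mul_norm_smul {w g : E} {r c : ℝ} (hc : 0 ≤ c) (hw : w ≠ 0)
    (h : ⟪‖w‖⁻¹ • w, g⟫_ℝ = r) : ⟪c • w, g⟫_ℝ = r * ‖c • w‖ := by
  have hw' : ‖w‖ ≠ 0 := norm_ne_zero_iff.mpr hw
  rw [real_inner_smul_left] at h
  rw [real_inner_smul_left, norm_smul, Real.norm_of_nonneg hc, ← h]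
  field_simp

theorem mul_norm_le_inner_add_of_norm_sub_le {u v g : E} {ρmin r D G : ℝ} (hρmin : 0 ≤ ρmin)
    (hr : ρmin ≤ r) (hv : ⟪v, g⟫_ℝ = r * ‖v‖) (huv : ‖u - v‖ ≤ D) (hg : ‖g‖ ≤ G) :
    ρmin * ‖u‖ ≤ ⟪u, g⟫_ℝ + (G + r) * D := by
  have hD : 0 ≤ D := (norm_nonneg _).trans huv
  have hvu : ⟪v - u, g⟫_ℝ ≤ D * G := by
    calc ⟪v - u, g⟫_ℝ ≤ ‖v - u‖ * ‖g‖ := real_inner_le_norm _ _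
      _ ≤ D * G := by rw [norm_sub_rev] at huv; gcongr
  calc ρmin * ‖u‖ ≤ ρmin * (‖v‖ + D) := by
        gcongr; exact (norm_le_norm_add_norm_sub' u v).trans (by gcongr)
    _ ≤ r * ‖v‖ + r * D := by
        rw [mul_add]; gcongr
    _ = ⟪u, g⟫_ℝ + ⟪v - u, g⟫_ℝ + r * D := by rw [← hv, inner_sub_left]; ring
    _ ≤ ⟪u, g⟫_ℝ + (G + r) * D := by linarith

theorem mul_norm_sum_le_inner_add {ι : Type*} (s : Finset ι) {ρ : ι → ℝ} {u v : ι → E} {g : E}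
    {ρmin D G : ℝ} (hρmin : 0 ≤ ρmin) (hρ : ∀ i ∈ s, ρmin ≤ ρ i) (hρs : ∑ i ∈ s, ρ i = 1)
    (hv : ∀ i ∈ s, ⟪v i, g⟫_ℝ = ρ i * ‖v i‖) (huv : ∀ i ∈ s, ‖u i - v i‖ ≤ D)
    (hg : ‖g‖ ≤ G) :
    ρmin * ‖∑ i ∈ s, ρ i • u i‖ ≤ ⟪∑ i ∈ s, ρ i • u i, g⟫_ℝ + (G + ∑ i ∈ s, ρ i ^ 2) * D := by
  have hρ0 : ∀ i ∈ s, 0 ≤ ρ i := fun i hi => hρmin.trans (hρ i hi)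
  calc ρmin * ‖∑ i ∈ s, ρ i • u i‖ ≤ ∑ i ∈ s, ρ i * (ρmin * ‖u i‖) := by
        refine (mul_le_mul_of_nonneg_left (norm_sum_le _ _) hρmin).trans_eq ?_
        rw [mul_sum]
        refine sum_congr rfl fun i hi => ?_
        rw [norm_smul, Real.norm_of_nonneg (hρ0 i hi)]; ring
    _ ≤ ∑ i ∈ s, ρ i * (⟪u i, g⟫_ℝ + (G + ρ i) * D) := by
        gcongr with i hi
        · exact hρ0 i hi
        · exact mul_norm_le_inner_add_of_norm_sub_le hρmin (hρ i hi) (hv i hi) (huv i hi) hg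
    _ = ⟪∑ i ∈ s, ρ i • u i, g⟫_ℝ + (G * ∑ i ∈ s, ρ i + ∑ i ∈ s, ρ i ^ 2) * D := by
        simp only [sum_inner, real_inner_smul_left, mul_sum, sum_mul, ← sum_add_distrib]
        exact sum_congr rfl fun i _ => by ring
    _ = ⟪∑ i ∈ s, ρ i • u i, g⟫_ℝ + (G + ∑ i ∈ s, ρ i ^ 2) * D := by rw [hρs, mul_one]

end Alignment

section Smooth

variable {E : Type*} [NormedAddCommGroup E] [InnerProductSpace ℝ E] [CompleteSpace E]

theorem apply_le_add_inner_gradient_add_sq {f : E → ℝ} {L : ℝ} (hf : Differentiable ℝ f)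
    (hLip : ∀ x y, ‖gradient f x - gradient f y‖ ≤ L * ‖x - y‖) (x y : E) :
    f y ≤ f x + ⟪gradient f x, y - x⟫_ℝ + L / 2 * ‖y - x‖ ^ 2 := by
  set v := y - x
  let φ : ℝ → ℝ := fun t => f (x + t • v) - t * ⟪gradient f x, v⟫_ℝ - L / 2 * t ^ 2 * ‖v‖ ^ 2
  have hφ : ∀ t, HasDerivAt φ
      (⟪gradient f (x + t • v), v⟫_ℝ - ⟪gradient f x, v⟫_ℝ - L * t * ‖v‖ ^ 2) t := by
    intro t
    have hline : HasDerivAt (fun s : ℝ => x + s • v) v t := by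
      simpa using ((hasDerivAt_id t).smul_const v).const_add x
    have hfline := (hf (x + t • v)).hasGradientAt.hasFDerivAt.comp_hasDerivAt t hline
    simp only [InnerProductSpace.toDual_apply_apply] at hfline
    refine ((hfline.sub ((hasDerivAt_id t).mul_const ⟪gradient f x, v⟫_ℝ)).sub
      (((hasDerivAt_pow 2 t).const_mul (L / 2)).mul_const (‖v‖ ^ 2))).congr_deriv ?_
    push_cast
    ring
  have hφ' : ∀ t ∈ interior (Set.Ici (0 : ℝ)),
      ⟪gradient f (x + t • v), v⟫_ℝ - ⟪gradient f x, v⟫_ℝ - L * t * ‖v‖ ^ 2 ≤ 0 := by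
    intro t ht
    rw [interior_Ici, Set.mem_Ioi] at ht
    have hgrad := hLip (x + t • v) x
    rw [add_sub_cancel_left, norm_smul, Real.norm_of_nonneg ht.le] at hgrad
    rw [sub_nonpos]
    calc ⟪gradient f (x + t • v), v⟫_ℝ - ⟪gradient f x, v⟫_ℝ
        = ⟪gradient f (x + t • v) - gradient f x, v⟫_ℝ := (inner_sub_left _ _ _).symm
      _ ≤ ‖gradient f (x + t • v) - gradient f x‖ * ‖v‖ := real_inner_le_norm _ _
      _ ≤ L * (t * ‖v‖) * ‖v‖ := by gcongr
      _ = L * t * ‖v‖ ^ 2 := by ring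
  have hanti : AntitoneOn φ (Set.Ici 0) :=
    antitoneOn_of_hasDerivWithinAt_nonpos (convex_Ici 0)
      (fun t _ => (hφ t).continuousAt.continuousWithinAt)
      (fun t _ => (hφ t).hasDerivWithinAt) hφ'
  have h01 := hanti Set.self_mem_Ici (Set.mem_Ici.mpr zero_le_one) zero_le_one
  simp only [φ, one_smul, zero_smul, add_zero, zero_mul, sub_zero, one_mul, mul_one,
    one_pow, ne_eq, OfNat.ofNat_ne_zero, not_false_eq_true, zero_pow, mul_zero, v,
    add_sub_cancel] at h01
  linarith

theorem apply_sub_smul_le {f : E → ℝ} {L G η : ℝ} (hf : Differentiable ℝ f) (hL : 0 ≤ L)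
    (hLip : ∀ x y, ‖gradient f x - gradient f y‖ ≤ L * ‖x - y‖) (x : E) {g : E} (hg : ‖g‖ ≤ G) :
    f (x - η • g) ≤ f x - η * ⟪gradient f x, g⟫_ℝ + L * η ^ 2 * G ^ 2 / 2 := by
  have h := apply_le_add_inner_gradient_add_sq hf hLip x (x - η • g)
  rw [sub_sub_cancel_left, inner_neg_right, real_inner_smul_right, norm_neg, norm_smul,
    Real.norm_eq_abs, mul_pow, sq_abs] at h
  have : ‖g‖ ^ 2 ≤ G ^ 2 := pow_le_pow_left₀ (norm_nonneg g) hg 2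
  have : L / 2 * (η ^ 2 * ‖g‖ ^ 2) ≤ L / 2 * (η ^ 2 * G ^ 2) := by gcongr
  linarith

theorem hasGradientAt_sum_mul {ι : Type*} (s : Finset ι) {f : ι → E → ℝ} (ρ : ι → ℝ) {x : E}
    (hf : ∀ i ∈ s, DifferentiableAt ℝ (f i) x) :
    HasGradientAt (fun x => ∑ i ∈ s, ρ i * f i x) (∑ i ∈ s, ρ i • gradient (f i) x) x := by
  have h : HasFDerivAt (fun x => ∑ i ∈ s, ρ i * f i x)
      (∑ i ∈ s, ρ i • InnerProductSpace.toDual ℝ E (gradient (f i) x)) x :=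
    HasFDerivAt.fun_sum fun i hi => (hf i hi).hasGradientAt.hasFDerivAt.const_mul (ρ i)
  rw [hasFDerivAt_iff_hasGradientAt] at h
  simpa only [map_sum, map_smul, LinearIsometryEquiv.symm_apply_apply] using h

theorem norm_traj_sub_le {f : E → ℝ} {ηl Gf : ℝ} (hηl : 0 ≤ ηl)
    (hGf : ∀ x, ‖gradient f x‖ ≤ Gf) (θ : E) (k : ℕ) :
    ‖traj f ηl θ k - θ‖ ≤ k * ηl * Gf := by
  induction k with
  | zero => simp [traj]
  | succ k ih =>
    calc ‖traj f ηl θ (k + 1) - θ‖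
        = ‖(traj f ηl θ k - θ) - ηl • gradient f (traj f ηl θ k)‖ := by rw [traj, sub_right_comm]
      _ ≤ ‖traj f ηl θ k - θ‖ + ηl * ‖gradient f (traj f ηl θ k)‖ :=
          (norm_sub_le _ _).trans_eq (by rw [norm_smul, Real.norm_of_nonneg hηl])
      _ ≤ k * ηl * Gf + ηl * Gf := by gcongr; exact hGf _
      _ = (k + 1 : ℕ) * ηl * Gf := by push_cast; ring

theorem norm_gradient_sub_smul_sum_gradient_traj_le {f : E → ℝ} {L ηl Gf : ℝ} (hL : 0 ≤ L)
    (hηl : 0 ≤ ηl) (hLip : ∀ x y, ‖gradient f x - gradient f y‖ ≤ L * ‖x - y‖)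
    (hGf : ∀ x, ‖gradient f x‖ ≤ Gf) (θ : E) {K : ℕ} (hK : K ≠ 0) :
    ‖gradient f θ - (K : ℝ)⁻¹ • ∑ k ∈ range K, gradient f (traj f ηl θ k)‖
      ≤ L * ηl * Gf * (K - 1) / 2 := by
  have hK' : (K : ℝ) ≠ 0 := Nat.cast_ne_zero.mpr hK
  have hsum : ‖∑ k ∈ range K, (gradient f θ - gradient f (traj f ηl θ k))‖
      ≤ L * ηl * Gf * (K * (K - 1) / 2) := by
    calc ‖∑ k ∈ range K, (gradient f θ - gradient f (traj f ηl θ k))‖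
        ≤ ∑ k ∈ range K, ‖gradient f θ - gradient f (traj f ηl θ k)‖ := norm_sum_le _ _
      _ ≤ ∑ k ∈ range K, L * ηl * Gf * k := by
          refine sum_le_sum fun k _ => (hLip _ _).trans ?_
          rw [norm_sub_rev]
          calc L * ‖traj f ηl θ k - θ‖ ≤ L * (k * ηl * Gf) := by
                gcongr; exact norm_traj_sub_le hηl hGf θ k
            _ = L * ηl * Gf * k := by ring
      _ = _ := by rw [← mul_sum, sum_range_natCast]
  have hdiff : gradient f θ - (K : ℝ)⁻¹ • ∑ k ∈ range K, gradient f (traj f ηl θ k)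
      = (K : ℝ)⁻¹ • ∑ k ∈ range K, (gradient f θ - gradient f (traj f ηl θ k)) := by
    rw [sum_sub_distrib, sum_const, card_range, smul_sub, ← Nat.cast_smul_eq_nsmul ℝ, smul_smul,
      inv_mul_cancel₀ hK', one_smul]
  rw [hdiff, norm_smul, Real.norm_of_nonneg (by positivity)]
  calc _ ≤ (K : ℝ)⁻¹ * (L * ηl * Gf * (K * (K - 1) / 2)) := by gcongr
    _ = _ := by field_simp

theorem mul_norm_sum_smul_gradient_le_inner_add {ι : Type*} [Fintype ι] {f : ι → E → ℝ}
    {L Gf ηl : ℝ} (hL : 0 ≤ L) (hηl : 0 < ηl)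
    (hLip : ∀ i x y, ‖gradient (f i) x - gradient (f i) y‖ ≤ L * ‖x - y‖)
    (hGf : ∀ i x, ‖gradient (f i) x‖ ≤ Gf) {ρ : ι → ℝ} {ρmin : ℝ} (hρmin : 0 ≤ ρmin)
    (hρ : ∀ i, ρmin ≤ ρ i) (hρs : ∑ i, ρ i = 1) {K : ι → ℕ} (hK : ∀ i, K i ≠ 0) {Kmax : ℕ}
    (hKmax : ∀ i, K i ≤ Kmax) (θ : E) (gI : ι → E)
    (hgI : ∀ i, gI i = ηl • ∑ k ∈ range (K i), gradient (f i) (traj (f i) ηl θ k))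
    (hne : ∀ i, gI i ≠ 0) {g : E} (halign : ∀ i, ⟪‖gI i‖⁻¹ • gI i, g⟫_ℝ = ρ i) {G : ℝ}
    (hg : ‖g‖ ≤ G) :
    ρmin * ‖∑ i, ρ i • gradient (f i) θ‖
      ≤ ⟪∑ i, ρ i • gradient (f i) θ, g⟫_ℝ
        + (G + ∑ i, ρ i ^ 2) * (L * ηl * Gf * (Kmax - 1) / 2) := by
  refine mul_norm_sum_le_inner_add univ (v := fun i => (ηl * K i)⁻¹ • gI i) hρmin
    (fun i _ => hρ i) hρs
    (fun i _ => real_inner_smul_eq_mul_norm_smul (by positivity) (hne i) (halign i))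
    (fun i _ => ?_) hg
  have hGf0 : 0 ≤ Gf := (norm_nonneg _).trans (hGf i θ)
  have hv : (ηl * K i)⁻¹ • gI i
      = (K i : ℝ)⁻¹ • ∑ k ∈ range (K i), gradient (f i) (traj (f i) ηl θ k) := by
    rw [hgI, smul_smul]
    congr 1
    field_simp
  rw [hv]
  refine (norm_gradient_sub_smul_sum_gradient_traj_le hL hηl.le (hLip i) (hGf i) θ (hK i)).trans ?_
  gcongr
  exact_mod_cast hKmax i

end Smooth

theorem average_gradient_norm_bound_general {d N : ℕ} (hd : 1 ≤ d)
    (f : Fin N → EuclideanSpace ℝ (Fin d) → ℝ) (L Gf : ℝ)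
    (hdiff : ∀ i, Differentiable ℝ (f i))
    (hLip : ∀ i x y, ‖gradient (f i) x - gradient (f i) y‖ ≤ L * ‖x - y‖)
    (hGf : ∀ i x, ‖gradient (f i) x‖ ≤ Gf)
    (ρ : Fin N → ℝ) (hρpos : ∀ i, 0 < ρ i) (hρsum : ∑ i, ρ i = 1)
    (F : EuclideanSpace ℝ (Fin d) → ℝ) (hF : F = fun x => ∑ i, ρ i * f i x)
    (Fstar : ℝ) (hFstar : ∀ x, Fstar ≤ F x)
    (ρmin : ℝ) (hρminlb : ∀ i, ρmin ≤ ρ i) (hρminmem : ∃ i, ρ i = ρmin)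
    (ηl ηg : ℝ) (hηl : 0 < ηl) (hηg : 0 < ηg)
    (K : Fin N → ℕ) (hK : ∀ i, 1 ≤ K i)
    (Kmax : ℕ) (hKmaxub : ∀ i, K i ≤ Kmax)
    (θt : ℕ → EuclideanSpace ℝ (Fin d)) (g : ℕ → EuclideanSpace ℝ (Fin d))
    (hstep : ∀ t, θt (t + 1) = θt t - ηg • g t)
    (gI : ℕ → Fin N → EuclideanSpace ℝ (Fin d))
    (hgI : ∀ t i, gI t i = ηl • ∑ k ∈ Finset.range (K i),
        gradient (f i) (traj (f i) ηl (θt t) k))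
    (hne : ∀ t i, gI t i ≠ 0)
    (halign : ∀ t i, ⟪‖gI t i‖⁻¹ • gI t i, g t⟫_ℝ = ρ i)
    (G : ℝ) (hG : ∀ t, ‖g t‖ ≤ G)
    (Bdrift : ℝ) (hB : Bdrift = L * Gf / 2 * (G + ∑ i, (ρ i) ^ 2))
    (T : ℕ) (hT : 1 ≤ T) :
    (1 / (T : ℝ)) * ∑ t ∈ Finset.range T, ‖gradient F (θt t)‖ ≤
      (F (θt 0) - Fstar) / (ρmin * ηg * T) + L * ηg * G ^ 2 / (2 * ρmin)
      + Bdrift / ρmin * (ηl * ((Kmax : ℝ) - 1)) := by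
  obtain ⟨i₀, hi₀⟩ := hρminmem
  have hρmin : 0 < ρmin := hi₀ ▸ hρpos i₀
  have : Nonempty (Fin d) := ⟨⟨0, hd⟩⟩
  have hL : 0 ≤ L := nonneg_of_forall_norm_sub_le_mul_norm_sub (hLip i₀)
  subst hB
  have hgradF : ∀ x, HasGradientAt F (∑ i, ρ i • gradient (f i) x) x :=
    fun x => hF ▸ hasGradientAt_sum_mul univ ρ fun i _ => hdiff i x
  have hLipF : ∀ x y, ‖gradient F x - gradient F y‖ ≤ L * ‖x - y‖ := fun x y => by
    rw [(hgradF x).gradient, (hgradF y).gradient]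
    exact norm_sum_smul_sub_sum_smul_le univ (fun i _ => (hρpos i).le) hρsum fun i _ => hLip i x y
  set C := L * ηg ^ 2 * G ^ 2 / 2 + ηg * ((G + ∑ i, ρ i ^ 2) * (L * ηl * Gf * (Kmax - 1) / 2))
    with hC
  have hround : ∀ t, ρmin * ηg * ‖gradient F (θt t)‖ ≤ F (θt t) - F (θt (t + 1)) + C := by
    intro t
    have hdesc := apply_sub_smul_le (η := ηg) (fun x => (hgradF x).differentiableAt) hL hLipF
      (θt t) (hG t)
    have hal := mul_norm_sum_smul_gradient_le_inner_add hL hηl hLip hGf hρmin.le hρminlb hρsum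
      (fun i => Nat.one_le_iff_ne_zero.mp (hK i)) hKmaxub (θt t) (gI t) (hgI t) (hne t)
      (halign t) (hG t)
    rw [← (hgradF _).gradient] at hal
    rw [hstep]
    linarith [mul_le_mul_of_nonneg_left hal hηg.le]
  have hsum := sum_range_le_sub_add_mul hround (fun t => hFstar (θt t)) T
  rw [← mul_sum] at hsum
  have hT0 : (0 : ℝ) < T := by exact_mod_cast hT
  have hden : 0 < ρmin * ηg * T := by positivity
  calc 1 / (T : ℝ) * ∑ t ∈ range T, ‖gradient F (θt t)‖
      = ρmin * ηg * (∑ t ∈ range T, ‖gradient F (θt t)‖) / (ρmin * ηg * T) := by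
        field_simp
    _ ≤ (F (θt 0) - Fstar + T * C) / (ρmin * ηg * T) := div_le_div_of_nonneg_right hsum hden.le
    _ = _ := by rw [hC]; field_simp; ring

/-- **Average gradient-norm bound.**
For a server trajectory `θ_{t+1} = θ_t − η_g g_t` whose aggregates satisfy the exact
alignment constraints with the (nonzero) accumulated client updates and `‖g_t‖ ≤ G`,
`(1/T) Σ_{t<T} ‖∇F(θ_t)‖ ≤ (F(θ₀)−F⋆)/(ρ_min η_g T) + L η_g G²/(2 ρ_min)
  + (B_drift/ρ_min) η_l (K_max − 1)`. -/
theorem average_gradient_norm_bound {d N : ℕ} (hd : 1 ≤ d) (hN : 1 ≤ N)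
    (f : Fin N → EuclideanSpace ℝ (Fin d) → ℝ) (L Gf : ℝ)
    (hdiff : ∀ i, Differentiable ℝ (f i))
    (hLip : ∀ i x y, ‖gradient (f i) x - gradient (f i) y‖ ≤ L * ‖x - y‖)
    (hGf : ∀ i x, ‖gradient (f i) x‖ ≤ Gf)
    (ρ : Fin N → ℝ) (hρpos : ∀ i, 0 < ρ i) (hρsum : ∑ i, ρ i = 1)
    (F : EuclideanSpace ℝ (Fin d) → ℝ) (hF : F = fun x => ∑ i, ρ i * f i x)
    (Fstar : ℝ) (hFstar : ∀ x, Fstar ≤ F x)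
    (ρmin : ℝ) (hρminlb : ∀ i, ρmin ≤ ρ i) (hρminmem : ∃ i, ρ i = ρmin)
    (ηl ηg : ℝ) (hηl : 0 < ηl) (hηg : 0 < ηg)
    (K : Fin N → ℕ) (hK : ∀ i, 1 ≤ K i)
    (Kmax : ℕ) (hKmaxub : ∀ i, K i ≤ Kmax) (hKmaxmem : ∃ i, K i = Kmax)
    (θt : ℕ → EuclideanSpace ℝ (Fin d)) (g : ℕ → EuclideanSpace ℝ (Fin d))
    (hstep : ∀ t, θt (t + 1) = θt t - ηg • g t)
    (gI : ℕ → Fin N → EuclideanSpace ℝ (Fin d))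
    (hgI : ∀ t i, gI t i = ηl • ∑ k ∈ Finset.range (K i),
        gradient (f i) (traj (f i) ηl (θt t) k))
    (hne : ∀ t i, gI t i ≠ 0)
    (halign : ∀ t i, ⟪‖gI t i‖⁻¹ • gI t i, g t⟫_ℝ = ρ i)
    (G : ℝ) (hG : ∀ t, ‖g t‖ ≤ G)
    (Bdrift : ℝ) (hB : Bdrift = L * Gf / 2 * (G + ∑ i, (ρ i) ^ 2))
    (T : ℕ) (hT : 1 ≤ T) :
    (1 / (T : ℝ)) * ∑ t ∈ Finset.range T, ‖gradient F (θt t)‖ ≤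
      (F (θt 0) - Fstar) / (ρmin * ηg * T) + L * ηg * G ^ 2 / (2 * ρmin)
      + Bdrift / ρmin * (ηl * ((Kmax : ℝ) - 1)) :=
  average_gradient_norm_bound_general hd f L Gf hdiff hLip hGf ρ hρpos hρsum F hF Fstar hFstar ρmin
    hρminlb hρminmem ηl ηg hηl hηg K hK Kmax hKmaxub θt g hstep gI hgI hne halign G hG Bdrift hB T
    hT
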